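/- arXiv:1702.06680 — 2 statements merged into one kernel-verified Lean document; each statement's English description precedes it below -/
import Mathlib

section
/- Let N ∈ ℕ, let y ∈ ℝ³ be nonzero, and let V be a 3×(N+1) real matrix. Then the matrix exponential of the (N+4)×(N+4) block matrix fromBlocks(S(y), V; 0, 0) equals fromBlocks(exp(S(y)), J_r(−y)·V; 0, I_{N+1}). In particular, the exponential map of the SLAM Lie group, applied to e = (e_θ, e_p, e¹, …, e^N), yields (exp(S(e_θ)), J_r(−e_θ)e_p, J_r(−e_θ)e¹, …, J_r(−e_θ)e^N) as in equation (18) of the paper. -/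
open Matrix
open Nat

/-- `S y` is the skew-symmetric matrix with `S y *ᵥ x = y ×₃ x` (cross-product matrix). -/
def S (y : EuclideanSpace ℝ (Fin 3)) : Matrix (Fin 3) (Fin 3) ℝ :=
  !![0, -y 2, y 1; y 2, 0, -y 0; -y 1, y 0, 0]

/-- The right Jacobian `J_r(y) = I − ((1−cos‖y‖)/‖y‖²)·S(y) + ((‖y‖−sin‖y‖)/‖y‖³)·S(y)²`. -/
noncomputable def Jr (y : EuclideanSpace ℝ (Fin 3)) : Matrix (Fin 3) (Fin 3) ℝ :=
  1 - ((1 - Real.cos ‖y‖) / ‖y‖ ^ 2) • S y + ((‖y‖ - Real.sin ‖y‖) / ‖y‖ ^ 3) • (S y ^ 2)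

lemma hasSum_cos_aux (θ : ℝ) (hθ : θ ≠ 0) :
    HasSum (fun k : ℕ => (-(θ ^ 2)) ^ k / ((2 * k + 2)! : ℝ)) ((1 - Real.cos θ) / θ ^ 2) := by
  have h0 := Real.hasSum_cos θ
  set f : ℕ → ℝ := fun n => (-1) ^ n * θ ^ (2 * n) / ↑(2 * n)! with hf
  have h1 : HasSum (fun n => f (n + 1)) (Real.cos θ - 1) :=
    (hasSum_nat_add_iff 1).mpr (by simpa [hf] using h0)
  have h2 := (h1.neg.div_const (θ ^ 2))
  have h3 : (fun k : ℕ => -(f (k + 1)) / θ ^ 2)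
      = fun k : ℕ => (-(θ ^ 2)) ^ k / ((2 * k + 2)! : ℝ) := by
    funext k
    have h4 : (2 * (k + 1)) = 2 * k + 2 := by ring
    have hfz : ((2 * k + 2)! : ℝ) ≠ 0 := Nat.cast_ne_zero.mpr (Nat.factorial_ne_zero _)
    simp only [hf, h4]
    have h5 : ((-(θ ^ 2)) : ℝ) ^ k = (-1) ^ k * θ ^ (2 * k) := by
      rw [neg_pow, pow_mul]
    rw [h5]
    field_simp
    ring
  rw [h3] at h2
  convert h2 using 1
  · rfl
  ring

lemma hasSum_sin_aux (θ : ℝ) (hθ : θ ≠ 0) :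
    HasSum (fun k : ℕ => (-(θ ^ 2)) ^ k / ((2 * k + 3)! : ℝ)) ((θ - Real.sin θ) / θ ^ 3) := by
  have h0 := Real.hasSum_sin θ
  set f : ℕ → ℝ := fun n => (-1) ^ n * θ ^ (2 * n + 1) / ↑(2 * n + 1)! with hf
  have h1 : HasSum (fun n => f (n + 1)) (Real.sin θ - θ) :=
    (hasSum_nat_add_iff 1).mpr (by simpa [hf] using h0)
  have h2 := (h1.neg.div_const (θ ^ 3))
  have h3 : (fun k : ℕ => -(f (k + 1)) / θ ^ 3)
      = fun k : ℕ => (-(θ ^ 2)) ^ k / ((2 * k + 3)! : ℝ) := by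
    funext k
    have h4 : (2 * (k + 1) + 1) = 2 * k + 3 := by ring
    have hfz : ((2 * k + 3)! : ℝ) ≠ 0 := Nat.cast_ne_zero.mpr (Nat.factorial_ne_zero _)
    simp only [hf, h4]
    have h5 : ((-(θ ^ 2)) : ℝ) ^ k = (-1) ^ k * θ ^ (2 * k) := by
      rw [neg_pow, pow_mul]
    rw [h5]
    field_simp
    ring
  rw [h3] at h2
  convert h2 using 1
  · rfl
  ring

lemma norm_sq_eq (y : EuclideanSpace ℝ (Fin 3)) :
    ‖y‖ ^ 2 = y 0 ^ 2 + y 1 ^ 2 + y 2 ^ 2 := by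
  rw [EuclideanSpace.norm_eq, Real.sq_sqrt (by positivity)]
  simp [Fin.sum_univ_three, sq_abs]

lemma S_cube (y : EuclideanSpace ℝ (Fin 3)) :
    S y ^ 3 = (-(‖y‖ ^ 2)) • S y := by
  have h := norm_sq_eq y
  ext i j
  fin_cases i <;> fin_cases j <;>
    simp [pow_succ, S, Matrix.mul_apply, Fin.sum_univ_three, h] <;> ring

lemma S_pow_odd (y : EuclideanSpace ℝ (Fin 3)) (k : ℕ) :
    S y ^ (2 * k + 1) = ((-(‖y‖ ^ 2)) ^ k) • S y := by
  induction k with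
  | zero => simp
  | succ k ih =>
    have h : 2 * (k + 1) + 1 = (2 * k + 1) + 2 := by ring
    rw [h, pow_add, ih, smul_mul_assoc,
      show S y * S y ^ (2:ℕ) = S y ^ 3 from by rw [← _root_.pow_succ'],
      S_cube, smul_smul, ← pow_succ]

lemma S_pow_even (y : EuclideanSpace ℝ (Fin 3)) (k : ℕ) :
    S y ^ (2 * k + 2) = ((-(‖y‖ ^ 2)) ^ k) • (S y ^ 2) := by
  rw [show 2 * k + 2 = (2 * k + 1) + 1 by ring, pow_succ, S_pow_odd, smul_mul_assoc, ← pow_two]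

lemma S_neg (y : EuclideanSpace ℝ (Fin 3)) : S (-y) = -S y := by
  ext i j
  fin_cases i <;> fin_cases j <;> simp [S]

lemma Jr_neg_eq (y : EuclideanSpace ℝ (Fin 3)) :
    Jr (-y) = 1 + ((1 - Real.cos ‖y‖) / ‖y‖ ^ 2) • S y
      + ((‖y‖ - Real.sin ‖y‖) / ‖y‖ ^ 3) • (S y ^ 2) := by
  unfold Jr
  rw [norm_neg, S_neg, neg_pow, smul_neg]
  simp [sub_neg_eq_add, neg_one_sq]

/-- The key HasSum: `∑ (n+1)!⁻¹ • (S y)^n = Jr (-y)`. -/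
lemma hasSum_Jr (y : EuclideanSpace ℝ (Fin 3)) (hy : y ≠ 0) :
    HasSum (fun n : ℕ => (((n + 1)! : ℝ))⁻¹ • S y ^ n) (Jr (-y)) := by
  set θ := ‖y‖ with hθdef
  have hθ : θ ≠ 0 := norm_ne_zero_iff.mpr hy
  have hodd : HasSum (fun k : ℕ => (((2 * k + 2)! : ℝ))⁻¹ • S y ^ (2 * k + 1))
      (((1 - Real.cos θ) / θ ^ 2) • S y) := by
    have h := (hasSum_cos_aux θ hθ).smul_const (S y)
    convert h using 2 with k
    rw [S_pow_odd, smul_smul, div_eq_mul_inv, mul_comm]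
  have heven' : HasSum (fun k : ℕ => (((2 * k + 3)! : ℝ))⁻¹ • S y ^ (2 * k + 2))
      (((θ - Real.sin θ) / θ ^ 3) • (S y ^ 2)) := by
    have h := (hasSum_sin_aux θ hθ).smul_const (S y ^ 2)
    convert h using 2 with k
    rw [S_pow_even, smul_smul, div_eq_mul_inv, mul_comm]
  set g : ℕ → Matrix (Fin 3) (Fin 3) ℝ := fun k => (((2 * k + 1)! : ℝ))⁻¹ • S y ^ (2 * k)
    with hg
  have hshift : HasSum (fun k => g (k + 1)) (((θ - Real.sin θ) / θ ^ 3) • (S y ^ 2)) := by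
    convert heven' using 2 with k
    simp only [hg]
    ring_nf
  have heven : HasSum g (((θ - Real.sin θ) / θ ^ 3) • (S y ^ 2) + 1) := by
    have h := (hasSum_nat_add_iff 1).mp hshift
    simpa [hg] using h
  have hodd' : HasSum (fun k : ℕ => (((2 * k + 1 + 1)! : ℝ))⁻¹ • S y ^ (2 * k + 1))
      (((1 - Real.cos θ) / θ ^ 2) • S y) := by
    convert hodd using 2 with k
  have hmain := HasSum.even_add_odd (f := fun n : ℕ => (((n + 1)! : ℝ))⁻¹ • S y ^ n)
    heven hodd'
  rw [Jr_neg_eq]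
  convert hmain using 1
  rw [← hθdef]
  abel

/-- The matrix exponential of the block matrix `fromBlocks (S y) V 0 0` equals
`fromBlocks (exp (S y)) (J_r(−y)·V) 0 I`; this is the exponential map of the SLAM Lie group
(equation (18) of the paper). -/
theorem exp_fromBlocks_slam (N : ℕ) (y : EuclideanSpace ℝ (Fin 3)) (hy : y ≠ 0)
    (V : Matrix (Fin 3) (Fin (N + 1)) ℝ) :
    NormedSpace.exp (Matrix.fromBlocks (S y) V 0 0)
      = Matrix.fromBlocks (NormedSpace.exp (S y)) (Jr (-y) * V) 0
          (1 : Matrix (Fin (N + 1)) (Fin (N + 1)) ℝ) := by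
  classical
  set A := S y with hA
  set M : Matrix (Fin 3 ⊕ Fin (N + 1)) (Fin 3 ⊕ Fin (N + 1)) ℝ := Matrix.fromBlocks A V 0 0
    with hM
  have hMpow : ∀ n : ℕ, M ^ (n + 1) = Matrix.fromBlocks (A ^ (n + 1)) (A ^ n * V) 0 0 := by
    intro n
    induction n with
    | zero => simp [hM]
    | succ n ih =>
      rw [pow_succ, ih, hM, Matrix.fromBlocks_multiply]
      simp [← pow_succ]
  have hexpA : HasSum (fun n : ℕ => ((n ! : ℝ))⁻¹ • A ^ n) (NormedSpace.exp A) := by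
    letI : SeminormedRing (Matrix (Fin 3) (Fin 3) ℝ) := Matrix.linftyOpSemiNormedRing
    letI : NormedRing (Matrix (Fin 3) (Fin 3) ℝ) := Matrix.linftyOpNormedRing
    letI : NormedAlgebra ℝ (Matrix (Fin 3) (Fin 3) ℝ) := Matrix.linftyOpNormedAlgebra
    exact NormedSpace.exp_series_hasSum_exp' A
  have hJ := hasSum_Jr y hy
  have hcont : Continuous (fun X : Matrix (Fin 3) (Fin 3) ℝ => X * V) :=
    continuous_id.matrix_mul continuous_const
  have hmulV : HasSum (fun n : ℕ => (((n + 1)! : ℝ))⁻¹ • (A ^ n * V)) (Jr (-y) * V) := by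
    have h := hJ.map
      ({ toFun := fun X => X * V, map_zero' := by simp,
         map_add' := fun a b => Matrix.add_mul a b V } :
        Matrix (Fin 3) (Fin 3) ℝ →+ Matrix (Fin 3) (Fin (N + 1)) ℝ) hcont
    convert h using 1
    funext n
    simp [Function.comp, smul_mul_assoc]
    rfl
    rfl
  have key : HasSum (fun n : ℕ => ((n ! : ℝ))⁻¹ • M ^ n)
      (Matrix.fromBlocks (NormedSpace.exp A) (Jr (-y) * V) 0 1) := by
    refine Pi.hasSum.mpr fun i => Pi.hasSum.mpr fun j => ?_
    rcases i with i | i <;> rcases j with j | j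
    · -- top-left block
      have h := Pi.hasSum.mp (Pi.hasSum.mp hexpA i) j
      simp only [Matrix.smul_apply, smul_eq_mul] at h ⊢
      simp only [Matrix.fromBlocks_apply₁₁]
      have hfun : (fun n : ℕ => ((n ! : ℝ))⁻¹ * (M ^ n) (Sum.inl i) (Sum.inl j))
          = fun n : ℕ => ((n ! : ℝ))⁻¹ * (A ^ n) i j := by
        funext n
        cases n with
        | zero => simp [Matrix.one_apply, Sum.inl.injEq]
        | succ n => rw [hMpow]; simp
      rw [hfun]
      exact h
    · -- top-right block
      have h := Pi.hasSum.mp (Pi.hasSum.mp hmulV i) j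
      simp only [Matrix.smul_apply, smul_eq_mul] at h ⊢
      simp only [Matrix.fromBlocks_apply₁₂]
      set f : ℕ → ℝ := fun n => ((n ! : ℝ))⁻¹ * (M ^ n) (Sum.inl i) (Sum.inr j) with hf
      have h2 : HasSum (fun n => f (n + 1)) ((Jr (-y) * V) i j) := by
        have hfun : (fun n : ℕ => f (n + 1))
            = fun n : ℕ => (((n + 1)! : ℝ))⁻¹ * (A ^ n * V) i j := by
          funext n
          simp only [hf]
          rw [hMpow]
          simp
        rw [hfun]
        exact h
      have h3 := (hasSum_nat_add_iff 1).mp h2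
      have hf0 : f 0 = 0 := by
        simp [hf, Matrix.one_apply]
      simpa [hf0] using h3
    · -- bottom-left block
      simp only [Matrix.smul_apply, smul_eq_mul, Matrix.fromBlocks_apply₂₁, Matrix.zero_apply]
      have hfun : (fun n : ℕ => ((n ! : ℝ))⁻¹ * (M ^ n) (Sum.inr i) (Sum.inl j))
          = fun _ : ℕ => (0 : ℝ) := by
        funext n
        cases n with
        | zero => simp [Matrix.one_apply]
        | succ n => rw [hMpow]; simp
      rw [hfun]
      exact hasSum_zero
    · -- bottom-right block
      simp only [Matrix.smul_apply, smul_eq_mul, Matrix.fromBlocks_apply₂₂]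
      have hfun : (fun n : ℕ => ((n ! : ℝ))⁻¹ * (M ^ n) (Sum.inr i) (Sum.inr j))
          = fun n : ℕ => if n = 0 then (1 : Matrix (Fin (N + 1)) (Fin (N + 1)) ℝ) i j else 0 := by
        funext n
        cases n with
        | zero => simp [Matrix.one_apply, Sum.inr.injEq]
        | succ n => rw [hMpow]; simp
      rw [hfun]
      exact hasSum_ite_eq 0 _
  rw [NormedSpace.exp_eq_tsum (𝕂 := ℝ)]
  exact key.tsum_eq
end

section
/- Let n, q, r ∈ ℕ, let P_A be an n×n real symmetric matrix, H a q×n real matrix with H·P_A = 0, A an n×r real matrix, Φ an r×r positive definite real matrix, Ψ a q×q positive definite real matrix, and l a positive integer. Suppose P₀ = P_A + A·Φ·Aᵀ is invertible. Then P₀^{-1} + l·Hᵀ·Ψ^{-1}·H is invertible and (P₀^{-1} + l·Hᵀ·Ψ^{-1}·H)^{-1} = P_A + A·(Φ^{-1} + l·(HA)ᵀ·Ψ^{-1}·(HA))^{-1}·Aᵀ. (Theorem 2 in information-matrix form: the covariance after l observations at point B equals P^A_∞ plus the term ad_{X̂_A}·E·(Φ̃^{-1} + l·H̃ᵀΨ̄^{-1}H̃)^{-1}·Eᵀ·ad_{X̂_A}ᵀ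 of equation (9).) -/
open Matrix

private lemma posSemidef_smul_aux {m : ℕ} {M : Matrix (Fin m) (Fin m) ℝ}
    (hM : M.PosSemidef) {c : ℝ} (hc : 0 ≤ c) : (c • M).PosSemidef := by
  refine Matrix.PosSemidef.of_dotProduct_mulVec_nonneg ?_ ?_
  · show (c • M)ᴴ = c • M
    rw [Matrix.conjTranspose_smul, hM.1.eq, star_trivial]
  · intro x
    rw [Matrix.smul_mulVec, dotProduct_smul, smul_eq_mul]
    exact mul_nonneg hc (hM.dotProduct_mulVec_nonneg x)

/-- Theorem 2 in information-matrix form: with `H·P_A = 0`, `P₀ = P_A + A·Φ·Aᵀ` invertible,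
the information matrix `P₀⁻¹ + l·HᵀΨ⁻¹H` is invertible and its inverse (the covariance
after `l` observations at point B) equals `P_A + A·(Φ⁻¹ + l·(HA)ᵀΨ⁻¹(HA))⁻¹·Aᵀ`
(equation (9) of the paper). -/
theorem information_matrix_identity (n q r : ℕ)
    (PA : Matrix (Fin n) (Fin n) ℝ) (hPA : PAᵀ = PA)
    (H : Matrix (Fin q) (Fin n) ℝ) (hHPA : H * PA = 0)
    (A : Matrix (Fin n) (Fin r) ℝ)
    (Φ : Matrix (Fin r) (Fin r) ℝ) (hΦ : Φ.PosDef)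
    (Ψ : Matrix (Fin q) (Fin q) ℝ) (hΨ : Ψ.PosDef)
    (l : ℕ) (hl : 0 < l)
    (P₀ : Matrix (Fin n) (Fin n) ℝ) (hP₀ : P₀ = PA + A * Φ * Aᵀ)
    (hP₀unit : IsUnit P₀) :
    IsUnit (P₀⁻¹ + (l : ℝ) • (Hᵀ * Ψ⁻¹ * H)) ∧
    (P₀⁻¹ + (l : ℝ) • (Hᵀ * Ψ⁻¹ * H))⁻¹
      = PA + A * (Φ⁻¹ + (l : ℝ) • ((H * A)ᵀ * Ψ⁻¹ * (H * A)))⁻¹ * Aᵀ := by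
  set B := H * A with hB
  set S := Φ⁻¹ + (l : ℝ) • (Bᵀ * Ψ⁻¹ * B) with hS
  have hΦinv : (Φ⁻¹).PosDef := hΦ.inv
  have hΨinv : (Ψ⁻¹).PosDef := hΨ.inv
  have hBsemi : ((l : ℝ) • (Bᵀ * Ψ⁻¹ * B)).PosSemidef := by
    apply posSemidef_smul_aux ?_ (by positivity)
    simpa using hΨinv.posSemidef.conjTranspose_mul_mul_same B
  have hSpd : S.PosDef := hΦinv.add_posSemidef hBsemi
  have hSdet : IsUnit S.det := isUnit_iff_ne_zero.mpr hSpd.det_pos.ne'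
  have hΦdet : IsUnit Φ.det := isUnit_iff_ne_zero.mpr hΦ.det_pos.ne'
  have hP₀det : IsUnit P₀.det := (Matrix.isUnit_iff_isUnit_det _).mp hP₀unit
  have hΦs : Φᵀ = Φ := by simpa using hΦ.1.eq
  have hP₀s : P₀ᵀ = P₀ := by
    rw [hP₀]; simp [transpose_add, transpose_mul, hPA, hΦs, Matrix.mul_assoc]
  -- H * (A*Φ*Aᵀ) * P₀⁻¹ = H
  have hHP₀ : H * P₀ = H * (A * Φ * Aᵀ) := by
    rw [hP₀, Matrix.mul_add, hHPA, zero_add]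
  have hH : H * (A * Φ * Aᵀ) * P₀⁻¹ = H := by
    rw [← hHP₀, Matrix.mul_assoc, Matrix.mul_nonsing_inv _ hP₀det, Matrix.mul_one]
  have hHt : P₀⁻¹ * (A * Φ * Aᵀ) * Hᵀ = Hᵀ := by
    have := congrArg Matrix.transpose hH
    simpa [Matrix.transpose_mul, Matrix.transpose_nonsing_inv, hP₀s, hΦs,
      Matrix.mul_assoc] using this
  -- key identity
  have hkey : P₀⁻¹ * A + (l : ℝ) • (Hᵀ * Ψ⁻¹ * B) = P₀⁻¹ * A * Φ * S := by
    have h1 : P₀⁻¹ * A * Φ * Φ⁻¹ = P₀⁻¹ * A := by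
      rw [Matrix.mul_assoc, Matrix.mul_nonsing_inv _ hΦdet, Matrix.mul_one]
    have h2 : P₀⁻¹ * A * Φ * (Bᵀ * Ψ⁻¹ * B) = Hᵀ * Ψ⁻¹ * B := by
      have : P₀⁻¹ * A * Φ * Bᵀ = Hᵀ := by
        have : P₀⁻¹ * (A * Φ * Aᵀ) * Hᵀ = P₀⁻¹ * A * Φ * (Aᵀ * Hᵀ) := by
          simp [Matrix.mul_assoc]
        rw [this] at hHt
        simpa [hB, Matrix.transpose_mul, Matrix.mul_assoc] using hHt
      calc P₀⁻¹ * A * Φ * (Bᵀ * Ψ⁻¹ * B) = (P₀⁻¹ * A * Φ * Bᵀ) * (Ψ⁻¹ * B) := by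
            simp [Matrix.mul_assoc]
        _ = Hᵀ * Ψ⁻¹ * B := by rw [this]; simp [Matrix.mul_assoc]
    rw [hS, Matrix.mul_add, h1, Matrix.mul_smul, h2]
  have hSS : S * S⁻¹ = 1 := Matrix.mul_nonsing_inv _ hSdet
  -- main product equals one
  have hMN : (P₀⁻¹ + (l : ℝ) • (Hᵀ * Ψ⁻¹ * H)) * (PA + A * S⁻¹ * Aᵀ) = 1 := by
    have hinvPA : P₀⁻¹ * PA = 1 - P₀⁻¹ * (A * Φ * Aᵀ) := by
      have : PA = P₀ - A * Φ * Aᵀ := by rw [hP₀]; abel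
      rw [this, Matrix.mul_sub, Matrix.nonsing_inv_mul _ hP₀det]
    have hHPAzero : Hᵀ * Ψ⁻¹ * H * PA = 0 := by
      rw [Matrix.mul_assoc, hHPA, Matrix.mul_zero]
    have expand : (P₀⁻¹ + (l : ℝ) • (Hᵀ * Ψ⁻¹ * H)) * (PA + A * S⁻¹ * Aᵀ)
        = (1 - P₀⁻¹ * (A * Φ * Aᵀ))
          + (P₀⁻¹ * A + (l : ℝ) • (Hᵀ * Ψ⁻¹ * B)) * (S⁻¹ * Aᵀ) := by
      simp only [Matrix.add_mul, Matrix.mul_add, Matrix.smul_mul, Matrix.mul_smul,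
        hinvPA, hB, Matrix.mul_assoc]
      rw [show Hᵀ * (Ψ⁻¹ * (H * PA)) = 0 by rw [hHPA]; simp]
      simp only [smul_zero, add_zero, zero_add]
    rw [expand, hkey, Matrix.mul_assoc (P₀⁻¹ * A * Φ), ← Matrix.mul_assoc S,
      hSS, Matrix.one_mul]
    simp [Matrix.mul_assoc]
  have hNM : (PA + A * S⁻¹ * Aᵀ) * (P₀⁻¹ + (l : ℝ) • (Hᵀ * Ψ⁻¹ * H)) = 1 :=
    mul_eq_one_comm.mp hMN
  refine ⟨⟨⟨_, _, hMN, hNM⟩, rfl⟩, ?_⟩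
  rw [Matrix.inv_eq_right_inv hMN]
end
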